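/- arXiv:math/0301341 — 7 statements merged into one kernel-verified Lean document; each statement's English description precedes it below -/
import Mathlib

section
/- Let n ≥ 1, let a : ℝⁿ → ℂ be a Schwartz function, and let w ∈ ℝⁿ. Then lim_{t→0⁺} (2πt)^{-n/2}·e^{-iπn/4}·∫_{ℝⁿ} exp(i‖z−w‖²/(2t))·a(z) dz = a(w). -/
/-!
For `0 < re b`, the multiplication formula `∫ 𝓕 g • f = ∫ g • 𝓕 f` applied to the modulated
Gaussian `g ξ = exp (-b‖ξ‖² + 2πi⟪w, ξ⟫)`, whose Fourier transform is
`(π / b) ^ (n / 2) · exp (-π²‖z - w‖² / b)`, gives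
`(π / b) ^ (n / 2) ∫ exp (-π²‖z - w‖² / b) f z dz = ∫ exp (-b‖ξ‖²) exp (2πi⟪w, ξ⟫) 𝓕 f ξ dξ`.
By dominated convergence both sides are continuous on `{0 ≤ re b} \ {0}`, so the identity
persists on the imaginary axis. At `b = 2π²t i` the left side is the Schrödinger kernel applied
to `f`, and as `t → 0⁺` the right side tends to `∫ exp (2πi⟪w, ξ⟫) 𝓕 f ξ dξ = f w` by Fourier
inversion.
-/

open Complex MeasureTheory Filter

open Set Topology
open scoped Real RealInnerProductSpace FourierTransform

namespace Complex

theorem re_ofReal_div_nonneg {c : ℝ} (hc : 0 ≤ c) {b : ℂ} (hb : 0 ≤ b.re) :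
    0 ≤ ((c : ℂ) / b).re := by
  rw [div_re, ofReal_re, ofReal_im, zero_mul, zero_div, add_zero]
  exact div_nonneg (mul_nonneg hc hb) (normSq_nonneg b)

theorem ofReal_div_mem_slitPlane {c : ℝ} (hc : 0 < c) {b : ℂ} (hb : 0 ≤ b.re) (hb0 : b ≠ 0) :
    (c : ℂ) / b ∈ slitPlane := by
  have hn : 0 < normSq b := normSq_pos.2 hb0
  rw [mem_slitPlane_iff, div_re, div_im, ofReal_re, ofReal_im]
  rcases hb.lt_or_eq with hb | hb
  · left
    simp only [zero_mul, zero_div, add_zero]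
    positivity
  · right
    have him : b.im ≠ 0 := fun h => hb0 (ext hb.symm h)
    simp only [zero_mul, zero_div, zero_sub]
    exact neg_ne_zero.2 (div_ne_zero (mul_ne_zero hc.ne' him) hn.ne')

theorem neg_I_div_ofReal_cpow {r : ℝ} (hr : 0 < r) (x : ℝ) :
    (-I / r) ^ (x : ℂ) = ((r ^ (-x) : ℝ) : ℂ) * cexp (-(π / 2) * I * x) := by
  have hne : -I / r ≠ 0 := div_ne_zero (neg_ne_zero.2 I_ne_zero) (ofReal_ne_zero.2 hr.ne')
  rw [cpow_def_of_ne_zero hne, div_eq_inv_mul, ← ofReal_inv,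
    log_ofReal_mul (inv_pos.2 hr) (neg_ne_zero.2 I_ne_zero), log_neg_I, Real.log_inv,
    Real.rpow_def_of_pos hr, ofReal_exp, ← exp_add]
  push_cast
  ring_nf

end Complex

section GaussianDamping

variable {α : Type*} [MeasurableSpace α] {μ : Measure α} {φ : α → ℝ} {h : α → ℂ}

theorem continuousOn_integral_cexp_neg_mul_mul (hφ : Measurable φ) (hφ0 : ∀ x, 0 ≤ φ x)
    (hh : Integrable h μ) :
    ContinuousOn (fun b : ℂ => ∫ x, cexp (-b * φ x) * h x ∂μ) {b | 0 ≤ b.re} := by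
  refine continuousOn_of_dominated (bound := fun x => ‖h x‖) (fun b _ => ?_) (fun b hb => ?_)
    hh.norm (Eventually.of_forall fun x => by fun_prop)
  · exact (by fun_prop : Measurable fun x => cexp (-b * φ x)).aestronglyMeasurable.mul
      hh.aestronglyMeasurable
  · refine Eventually.of_forall fun x => ?_
    have hre : (-b * φ x).re ≤ 0 := by
      simpa using mul_nonneg (show 0 ≤ b.re from hb) (hφ0 x)
    rw [norm_mul, norm_exp]
    exact mul_le_of_le_one_left (norm_nonneg _) (Real.exp_le_one_iff.2 hre)

end GaussianDamping

variable {V : Type*} [NormedAddCommGroup V] [InnerProductSpace ℝ V] [MeasurableSpace V]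
  [BorelSpace V]

theorem MeasureTheory.Integrable.cexp_two_pi_I_inner_mul {μ : Measure V} {g : V → ℂ}
    (hg : Integrable g μ) (w : V) :
    Integrable (fun ξ => cexp (2 * π * I * ⟪w, ξ⟫) * g ξ) μ :=
  hg.bdd_mul (c := 1) (by fun_prop) (Eventually.of_forall fun ξ => by simp [norm_exp])

variable [FiniteDimensional ℝ V] {f : V → ℂ}

theorem cpow_mul_integral_cexp_neg_mul_norm_sub_sq_mul (hf : Integrable f) (w : V) {b : ℂ}
    (hb : 0 < b.re) :
    (π / b) ^ (Module.finrank ℝ V / 2 : ℂ) * ∫ z, cexp (-(π ^ 2 / b) * ‖z - w‖ ^ 2) * f z =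
      ∫ ξ, cexp (-b * ‖ξ‖ ^ 2) * (cexp (2 * π * I * ⟪w, ξ⟫) * 𝓕 f ξ) := by
  have hP : ∫ ξ, 𝓕 (fun v : V => cexp (-b * ‖v‖ ^ 2 + 2 * π * I * ⟪w, v⟫)) ξ • f ξ =
      ∫ x, cexp (-b * ‖x‖ ^ 2 + 2 * π * I * ⟪w, x⟫) • 𝓕 f x := by
    have := VectorFourier.integral_fourierIntegral_smul_eq_flip (L := innerₗ V)
      Real.continuous_fourierChar continuous_inner
      (GaussianFourier.integrable_cexp_neg_mul_sq_norm_add hb (2 * π * I) w) hf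
    rw [flip_innerₗ] at this
    exact this
  simp_rw [fourier_gaussian_innerProductSpace' hb, smul_eq_mul, exp_add] at hP
  rw [← integral_const_mul]
  convert hP using 1 <;> congr 1 <;> ext z
  · rw [norm_sub_rev]
    ring_nf
  · ring

theorem cpow_mul_integral_cexp_neg_mul_norm_sub_sq_mul_of_re_nonneg (hf : Integrable f)
    (hf' : Integrable (𝓕 f)) (w : V) {b : ℂ} (hb : 0 ≤ b.re) (hb0 : b ≠ 0) :
    (π / b) ^ (Module.finrank ℝ V / 2 : ℂ) * ∫ z, cexp (-(π ^ 2 / b) * ‖z - w‖ ^ 2) * f z =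
      ∫ ξ, cexp (-b * ‖ξ‖ ^ 2) * (cexp (2 * π * I * ⟪w, ξ⟫) * 𝓕 f ξ) := by
  refine EqOn.of_subset_closure (s := {b : ℂ | 0 < b.re}) (t := {b : ℂ | 0 ≤ b.re} \ {0})
    (fun b hb => cpow_mul_integral_cexp_neg_mul_norm_sub_sq_mul hf w hb) ?_ ?_
    (fun b (hb : 0 < b.re) => ⟨show 0 ≤ b.re from hb.le, fun h => by simp_all⟩) (by simp)
    ⟨hb, hb0⟩
  · have hdiv (c : ℂ) : ContinuousOn (c / ·) ({b : ℂ | 0 ≤ b.re} \ {0}) :=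
      continuousOn_const.div continuousOn_id fun b hb => hb.2
    have hint := continuousOn_integral_cexp_neg_mul_mul (μ := volume)
      (φ := fun z : V => ‖z - w‖ ^ 2) (by fun_prop) (fun z => by positivity) hf
    simp only [ofReal_pow] at hint
    refine ((hdiv π).cpow_const fun b hb => ofReal_div_mem_slitPlane Real.pi_pos hb.1 hb.2).mul
      (hint.comp (hdiv (π ^ 2)) fun b hb => ?_)
    rw [← ofReal_pow]
    exact re_ofReal_div_nonneg (by positivity) hb.1
  · have := continuousOn_integral_cexp_neg_mul_mul (μ := volume) (φ := fun ξ : V => ‖ξ‖ ^ 2)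
      (by fun_prop) (fun z => by positivity) (hf'.cexp_two_pi_I_inner_mul w)
    simp only [ofReal_pow] at this
    exact this.mono sdiff_subset

/-- `b = 2π²t i` is the point of the imaginary axis with `π² / b = -i / (2t)`, hence
`π / b = -i / (2πt)`. -/
theorem cpow_mul_integral_cexp_I_mul_norm_sub_sq_div_mul (hf : Integrable f)
    (hf' : Integrable (𝓕 f)) (w : V) {t : ℝ} (ht : 0 < t) :
    (-I / (2 * π * t)) ^ (Module.finrank ℝ V / 2 : ℂ) *
        ∫ z, cexp (I * ‖z - w‖ ^ 2 / (2 * t)) * f z =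
      ∫ ξ, cexp (-(((2 * π ^ 2 * t : ℝ) : ℂ) * I) * ‖ξ‖ ^ 2) *
        (cexp (2 * π * I * ⟪w, ξ⟫) * 𝓕 f ξ) := by
  have ht0 : (t : ℂ) ≠ 0 := ofReal_ne_zero.2 ht.ne'
  have hpi : (π : ℂ) ≠ 0 := ofReal_ne_zero.2 Real.pi_ne_zero
  rw [← cpow_mul_integral_cexp_neg_mul_norm_sub_sq_mul_of_re_nonneg hf hf' w
    (by simp only [mul_I_re, ofReal_im, neg_zero, le_refl]) (by simp [ht0, hpi])]
  congr 2
  · field_simp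
    push_cast
    linear_combination (-(2 * π ^ 2 * t : ℂ)) * I_sq
  · ext z
    congr 2
    field_simp
    push_cast
    linear_combination (2 * π ^ 2 * t * ‖z - w‖ ^ 2 : ℂ) * I_sq

theorem tendsto_cpow_mul_integral_cexp_I_mul_norm_sub_sq_div_mul (hf : Integrable f)
    (hf' : Integrable (𝓕 f)) {w : V} (hw : ContinuousAt f w) :
    Tendsto (fun t : ℝ => (-I / (2 * π * t)) ^ (Module.finrank ℝ V / 2 : ℂ) *
        ∫ z, cexp (I * ‖z - w‖ ^ 2 / (2 * t)) * f z) (𝓝[>] 0) (𝓝 (f w)) := by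
  set b : ℝ → ℂ := fun t => ((2 * π ^ 2 * t : ℝ) : ℂ) * I
  have hb : Tendsto b (𝓝[>] 0) (𝓝[{b | 0 ≤ b.re}] 0) :=
    tendsto_nhdsWithin_iff.2
      ⟨((by fun_prop : Continuous b).tendsto' 0 0 (by simp [b])).mono_left nhdsWithin_le_nhds,
        Eventually.of_forall fun t => show 0 ≤ (b t).re by
          simp only [b, mul_I_re, ofReal_im, neg_zero, le_refl]⟩
  have hcont := (continuousOn_integral_cexp_neg_mul_mul (μ := volume)
    (φ := fun ξ : V => ‖ξ‖ ^ 2) (by fun_prop) (fun z => by positivity)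
    (hf'.cexp_two_pi_I_inner_mul w)).continuousWithinAt (x := 0) (by simp)
  have hinversion : ∫ ξ, cexp (-0 * ((‖ξ‖ ^ 2 : ℝ) : ℂ)) * (cexp (2 * π * I * ⟪w, ξ⟫) * 𝓕 f ξ) =
      f w := by
    rw [← hf.fourierInv_fourier_eq hf' hw, Real.fourierInv_eq']
    congr 1 with v
    rw [smul_eq_mul, real_inner_comm, neg_zero, zero_mul, exp_zero, one_mul]
    push_cast
    ring_nf
  rw [← hinversion]
  refine (hcont.tendsto.comp hb).congr' (eventually_nhdsWithin_of_forall fun t ht => ?_)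
  simp only [Function.comp_apply, b, ofReal_pow]
  exact (cpow_mul_integral_cexp_I_mul_norm_sub_sq_div_mul hf hf' w ht).symm

theorem stmt1_general (n : ℕ) (a : SchwartzMap (EuclideanSpace ℝ (Fin n)) ℂ)
    (w : EuclideanSpace ℝ (Fin n)) :
    Tendsto
      (fun t : ℝ =>
        (((2 * Real.pi * t) ^ (-(n : ℝ) / 2) : ℝ) : ℂ)
          * Complex.exp (-Complex.I * Real.pi * n / 4)
          * ∫ z : EuclideanSpace ℝ (Fin n),
              Complex.exp (Complex.I * ((‖z - w‖ ^ 2 : ℝ) : ℂ) / (2 * (t : ℂ))) * a z)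
      (nhdsWithin 0 (Set.Ioi 0)) (nhds (a w)) := by
  have ha : Integrable (𝓕 (a : EuclideanSpace ℝ (Fin n) → ℂ)) := by
    rw [← SchwartzMap.fourier_coe]
    exact (𝓕 a).integrable
  refine (tendsto_cpow_mul_integral_cexp_I_mul_norm_sub_sq_div_mul a.integrable ha
    a.continuous.continuousAt).congr' (eventually_nhdsWithin_of_forall fun t (ht : 0 < t) => ?_)
  have hpre := neg_I_div_ofReal_cpow (r := 2 * π * t) (by positivity) (n / 2)
  push_cast at hpre
  rw [finrank_euclideanSpace_fin, hpre]
  simp only [neg_div, ofReal_pow]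
  congr 3
  ring

/-- Stationary phase / initial-condition verification for the Schrödinger parametrix:
for a Schwartz function `a`,
`(2πt)^{-n/2} e^{-iπn/4} ∫ e^{i‖z−w‖²/(2t)} a(z) dz → a(w)` as `t → 0⁺`. -/
theorem stmt1 (n : ℕ) (hn : 1 ≤ n) (a : SchwartzMap (EuclideanSpace ℝ (Fin n)) ℂ)
    (w : EuclideanSpace ℝ (Fin n)) :
    Tendsto
      (fun t : ℝ =>
        (((2 * Real.pi * t) ^ (-(n : ℝ) / 2) : ℝ) : ℂ)
          * Complex.exp (-Complex.I * Real.pi * n / 4)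
          * ∫ z : EuclideanSpace ℝ (Fin n),
              Complex.exp (Complex.I * ((‖z - w‖ ^ 2 : ℝ) : ℂ) / (2 * (t : ℂ))) * a z)
      (nhdsWithin 0 (Set.Ioi 0)) (nhds (a w)) :=
  stmt1_general n a w
end

section
/- Let x, λ : [0,∞) → ℝ be differentiable with x(0) > 0, λ(0) < 0, and suppose x'(t) = λ(t)·x(t) and λ'(t) ≤ λ(t) + λ(t)² for all t ≥ 0. Then: (i) λ(t) < 0 for all t ≥ 0; (ii) x(t) > 0 for all t and x is nonincreasing; (iii) limsup_{t→∞} λ(t) ≤ −1. -/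
/-!
Both sign statements are instances of the linear differential inequality `f' ≤ a f`, which the
integrating factor `exp (-∫ a)` turns into monotonicity: `λ' ≤ (1 + λ) λ` keeps `λ` negative and
`(-x)' = λ (-x)` keeps `x` positive. Once `λ < 0`, the substitution `ν = -1/λ` linearises the
Riccati inequality to `ν' ≤ 1 - ν`, so `ν ≤ 1 + C e^{-t}`; that is, `λ` lies below the exact
solution `-1 / (1 + C e^{-t})` of `λ' = λ + λ²`, which tends to `-1`.
-/

open Filter Set Real Topology

theorem antitoneOn_Ici_of_hasDerivAt_nonpos {g g' : ℝ → ℝ} {t₀ : ℝ}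
    (hg : ∀ t ∈ Ici t₀, HasDerivAt g (g' t) t) (hg' : ∀ t ∈ Ici t₀, g' t ≤ 0) :
    AntitoneOn g (Ici t₀) := by
  refine antitoneOn_of_hasDerivWithinAt_nonpos (f' := g') (convex_Ici t₀)
    (fun t ht => (hg t ht).continuousAt.continuousWithinAt) (fun t ht => ?_) (fun t ht => ?_)
  all_goals rw [interior_Ici] at ht
  · exact (hg t (mem_Ici_of_Ioi ht)).hasDerivWithinAt
  · exact hg' t (mem_Ici_of_Ioi ht)

theorem le_mul_exp_integral_of_hasDerivAt_le {f f' a : ℝ → ℝ} {t₀ : ℝ}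
    (ha : ContinuousOn a (Ici t₀)) (hf : ∀ t ∈ Ici t₀, HasDerivAt f (f' t) t)
    (hle : ∀ t ∈ Ici t₀, f' t ≤ a t * f t) {t : ℝ} (ht : t ∈ Ici t₀) :
    f t ≤ f t₀ * exp (∫ s in t₀..t, a s) := by
  -- `a` extended continuously to the left of `t₀`, so that its primitive is differentiable everywhere
  set b : ℝ → ℝ := fun s => a (max s t₀)
  have hb : Continuous b :=
    ha.comp_continuous (continuous_id.max continuous_const) fun s => le_max_right s t₀
  have hba : ∀ s ∈ Ici t₀, b s = a s := fun s hs => by simp only [b, max_eq_left (mem_Ici.mp hs)]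
  set A : ℝ → ℝ := fun s => ∫ r in t₀..s, b r
  have hA : ∀ s, HasDerivAt A (b s) s := fun s =>
    intervalIntegral.integral_hasDerivAt_right (hb.intervalIntegrable _ _)
      (hb.stronglyMeasurableAtFilter _ _) hb.continuousAt
  have hanti : AntitoneOn (fun s => f s * exp (-A s)) (Ici t₀) := by
    refine antitoneOn_Ici_of_hasDerivAt_nonpos (fun s hs => (hf s hs).mul (hA s).neg.exp)
      fun s hs => ?_
    rw [hba s hs, Pi.neg_apply]
    nlinarith [hle s hs, exp_pos (-A s)]
  have hAt : A t = ∫ s in t₀..t, a s := intervalIntegral.integral_congr fun s hs =>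
    hba s (by rw [uIcc_of_le (mem_Ici.mp ht)] at hs; exact hs.1)
  have hdecay : f t * exp (-A t) ≤ f t₀ := by
    simpa [A] using hanti self_mem_Ici ht (mem_Ici.mp ht)
  calc f t = f t * exp (-A t) * exp (A t) := by
        rw [mul_assoc, ← exp_add, neg_add_cancel, exp_zero, mul_one]
    _ ≤ f t₀ * exp (A t) := by gcongr
    _ = f t₀ * exp (∫ s in t₀..t, a s) := by rw [hAt]

theorem neg_of_hasDerivAt_le_mul {f f' a : ℝ → ℝ} {t₀ : ℝ}
    (ha : ContinuousOn a (Ici t₀)) (hf : ∀ t ∈ Ici t₀, HasDerivAt f (f' t) t)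
    (hle : ∀ t ∈ Ici t₀, f' t ≤ a t * f t) (h₀ : f t₀ < 0) {t : ℝ} (ht : t ∈ Ici t₀) :
    f t < 0 :=
  (le_mul_exp_integral_of_hasDerivAt_le ha hf hle ht).trans_lt
    (mul_neg_of_neg_of_pos h₀ (exp_pos _))

section Riccati

variable {lam : ℝ → ℝ} (hdiff : ∀ t : ℝ, 0 ≤ t → DifferentiableAt ℝ lam t)
  (hineq : ∀ t : ℝ, 0 ≤ t → deriv lam t ≤ lam t + lam t ^ 2)
  (hlam0 : lam 0 < 0)
include hdiff hineq hlam0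

theorem neg_of_deriv_le_self_add_sq {t : ℝ} (ht : 0 ≤ t) : lam t < 0 :=
  neg_of_hasDerivAt_le_mul (a := fun t => 1 + lam t)
    (continuousOn_const.add (continuousOn_of_forall_continuousAt fun t ht =>
      (hdiff t ht).continuousAt))
    (fun t ht => (hdiff t ht).hasDerivAt) (fun t ht => by nlinarith [hineq t ht]) hlam0 ht

theorem le_neg_inv_one_add_mul_exp_of_deriv_le_self_add_sq {t : ℝ} (ht : 0 ≤ t) :
    lam t ≤ -(1 + (-(lam 0)⁻¹ - 1) * exp (-t))⁻¹ := by
  have hneg : ∀ t : ℝ, 0 ≤ t → lam t < 0 := fun t => neg_of_deriv_le_self_add_sq hdiff hineq hlam0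
  set ν : ℝ → ℝ := fun t => -(lam t)⁻¹
  have hν : ∀ s ∈ Ici (0 : ℝ), HasDerivAt (fun s => ν s - 1) (deriv lam s / lam s ^ 2) s := by
    intro s hs
    exact (((hdiff s hs).hasDerivAt.inv (hneg s hs).ne).neg.sub_const 1).congr_deriv (by ring)
  have hν' : ∀ s ∈ Ici (0 : ℝ), deriv lam s / lam s ^ 2 ≤ -1 * (ν s - 1) := by
    intro s hs
    have hlam : lam s ≠ 0 := (hneg s hs).ne
    rw [div_le_iff₀ (sq_pos_of_neg (hneg s hs))]
    have hrhs : -1 * (ν s - 1) * lam s ^ 2 = lam s + lam s ^ 2 := by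
      simp only [ν]
      field_simp
      ring
    exact hrhs ▸ hineq s hs
  have hbound := le_mul_exp_integral_of_hasDerivAt_le continuousOn_const hν hν' (mem_Ici.mpr ht)
  simp only [intervalIntegral.integral_const, sub_zero, smul_eq_mul, mul_neg_one] at hbound
  have hνpos : 0 < ν t := neg_pos.mpr (inv_lt_zero.mpr (hneg t ht))
  calc lam t = -(ν t)⁻¹ := by simp [ν]
    _ ≤ -(1 + (ν 0 - 1) * exp (-t))⁻¹ := by
        gcongr
        linarith

theorem eventually_le_neg_one_add_of_deriv_le_self_add_sq :
    ∀ ε > (0 : ℝ), ∀ᶠ t in atTop, lam t ≤ -1 + ε := by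
  intro ε hε
  have hlim : Tendsto (fun t => -(1 + (-(lam 0)⁻¹ - 1) * exp (-t))⁻¹) atTop (𝓝 (-1)) := by
    simpa using (((tendsto_exp_neg_atTop_nhds_zero.const_mul (-(lam 0)⁻¹ - 1)).const_add
      1).inv₀ (by simp)).neg
  filter_upwards [hlim.eventually_le_const (by linarith : (-1 : ℝ) < -1 + ε),
    eventually_ge_atTop 0] with t hle ht
  exact (le_neg_inv_one_add_mul_exp_of_deriv_le_self_add_sq hdiff hineq hlam0 ht).trans hle

end Riccati

/-- Riccati comparison argument: if `x' = λ·x`, `λ' ≤ λ + λ²` on `[0,∞)` with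
`x(0) > 0` and `λ(0) < 0`, then `λ` stays negative, `x` stays positive and is
nonincreasing, and `limsup λ ≤ −1` (i.e. eventually `λ ≤ −1 + ε` for every `ε > 0`). -/
theorem stmt5 (x lam : ℝ → ℝ)
    (hx0 : 0 < x 0) (hlam0 : lam 0 < 0)
    (hdx : ∀ t : ℝ, 0 ≤ t → HasDerivAt x (lam t * x t) t)
    (hdiff : ∀ t : ℝ, 0 ≤ t → DifferentiableAt ℝ lam t)
    (hineq : ∀ t : ℝ, 0 ≤ t → deriv lam t ≤ lam t + (lam t) ^ 2) :
    (∀ t : ℝ, 0 ≤ t → lam t < 0) ∧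
    ((∀ t : ℝ, 0 ≤ t → 0 < x t) ∧ AntitoneOn x (Set.Ici 0)) ∧
    (∀ ε > (0 : ℝ), ∀ᶠ t in atTop, lam t ≤ -1 + ε) := by
  have hneg : ∀ t : ℝ, 0 ≤ t → lam t < 0 := fun t =>
    neg_of_deriv_le_self_add_sq hdiff hineq hlam0
  have hxpos : ∀ t : ℝ, 0 ≤ t → 0 < x t := fun t ht =>
    neg_neg_iff_pos.mp <| neg_of_hasDerivAt_le_mul (f := -x) (a := lam)
      (continuousOn_of_forall_continuousAt fun t ht => (hdiff t ht).continuousAt)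
      (fun t ht => (hdx t ht).neg) (fun t ht => by simp) (by simpa using hx0) ht
  exact ⟨hneg, ⟨hxpos, antitoneOn_Ici_of_hasDerivAt_nonpos hdx fun t ht =>
    mul_nonpos_of_nonpos_of_nonneg (hneg t ht).le (hxpos t ht).le⟩,
    eventually_le_neg_one_add_of_deriv_le_self_add_sq hdiff hineq hlam0⟩
end

section
/- Let λ : [0,∞) → ℝ and e : [0,∞) → ℝ with λ differentiable, λ'(t) = λ(t) + λ(t)² + e(t) for all t ≥ 0, e(t) → 0 as t → ∞, and suppose there is T ≥ 0 with λ(t) ≤ −3/4 for all t ≥ T. Then λ(t) → −1 as t → ∞. -/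
open Filter

/-- Attracting fixed point argument: if `λ' = λ + λ² + e` on `[0,∞)` with `e(t) → 0`
and `λ(t) ≤ −3/4` for all large `t`, then `λ(t) → −1`. -/
theorem stmt6 (lam e : ℝ → ℝ)
    (hdl : ∀ t : ℝ, 0 ≤ t → HasDerivAt lam (lam t + (lam t) ^ 2 + e t) t)
    (he : Tendsto e atTop (nhds 0))
    (T : ℝ) (hT : 0 ≤ T) (hbound : ∀ t : ℝ, T ≤ t → lam t ≤ -3 / 4) :
    Tendsto lam atTop (nhds (-1)) := by
  set v : ℝ → ℝ := fun t => (lam t + 1) ^ 2 with hvdef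
  set vd : ℝ → ℝ := fun t => 2 * (lam t + 1) * (lam t + (lam t) ^ 2 + e t) with hvddef
  have hv : ∀ t : ℝ, 0 ≤ t → HasDerivAt v (vd t) t := by
    intro t ht
    have h1 : HasDerivAt (fun s => lam s + 1) (lam t + (lam t) ^ 2 + e t) t :=
      (hdl t ht).add_const 1
    have : HasDerivAt (fun s => (lam s + 1) ^ 2) _ t := h1.fun_pow 2
    convert this using 1
    simp [hvddef]
  -- key Gronwall estimate
  have key : ∀ ε : ℝ, 0 < ε → ∀ a : ℝ, T ≤ a → (∀ s : ℝ, a ≤ s → (e s) ^ 2 ≤ ε) →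
      ∀ t : ℝ, a ≤ t → v t ≤ v a * Real.exp (-(1/2) * (t - a)) + 2 * ε := by
    intro ε hε a ha hea t hta
    have ha0 : (0:ℝ) ≤ a := le_trans hT ha
    have hcont : ContinuousOn v (Set.Icc a t) := by
      intro x hx
      exact ((hv x (le_trans ha0 hx.1)).continuousAt).continuousWithinAt
    have hslope : ∀ x ∈ Set.Ico a t, ∀ r, vd x < r →
        ∃ᶠ z in nhdsWithin x (Set.Ioi x), (z - x)⁻¹ * (v z - v x) < r := by
      intro x hx r hr
      exact ((hv x (le_trans ha0 hx.1)).hasDerivWithinAt).liminf_right_slope_le hr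
    have hbnd : ∀ x ∈ Set.Ico a t, vd x ≤ -(1/2) * v x + ε := by
      intro x hx
      have hlx : lam x ≤ -3/4 := hbound x (le_trans ha hx.1)
      have hex : (e x) ^ 2 ≤ ε := hea x hx.1
      have hu : lam x + 1 ≤ 1/4 := by linarith
      simp only [hvddef, hvdef]
      nlinarith [sq_nonneg (lam x + 1 - e x), sq_nonneg (lam x + 1),
        mul_nonneg (sq_nonneg (lam x + 1)) (by linarith : (0:ℝ) ≤ 1/4 - (lam x + 1))]
    have hg := le_gronwallBound_of_liminf_deriv_right_le (f := v) (f' := vd)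
      (δ := v a) (K := -(1/2)) (ε := ε) hcont hslope le_rfl hbnd t ⟨hta, le_rfl⟩
    have hK : (-(1/2) : ℝ) ≠ 0 := by norm_num
    rw [gronwallBound_of_K_ne_0 hK] at hg
    have hexp : (0:ℝ) ≤ Real.exp (-(1/2) * (t - a)) := (Real.exp_pos _).le
    calc v t ≤ v a * Real.exp (-(1/2) * (t - a)) +
          ε / (-(1/2)) * (Real.exp (-(1/2) * (t - a)) - 1) := hg
      _ ≤ v a * Real.exp (-(1/2) * (t - a)) + 2 * ε := by nlinarith
  -- v → 0
  have he2 : Tendsto (fun t => (e t) ^ 2) atTop (nhds 0) := by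
    have := he.pow 2
    simpa using this
  have hv0 : Tendsto v atTop (nhds 0) := by
    rw [tendsto_order]
    constructor
    · intro c hc
      filter_upwards with t
      exact lt_of_lt_of_le hc (sq_nonneg _)
    · intro c hc
      have hε : (0:ℝ) < c / 3 := by linarith
      have hev : ∀ᶠ s in atTop, (e s) ^ 2 ≤ c / 3 :=
        (he2.eventually (eventually_le_nhds hε))
      obtain ⟨N, hN⟩ := hev.exists_forall_of_atTop
      set a : ℝ := max T N with hadef
      have haT : T ≤ a := le_max_left _ _
      have hea : ∀ s : ℝ, a ≤ s → (e s) ^ 2 ≤ c / 3 :=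
        fun s hs => hN s (le_trans (le_max_right _ _) hs)
      have hkey := key (c/3) hε a haT hea
      -- v a * exp(-(1/2)(t-a)) → 0
      have hlin : Tendsto (fun t : ℝ => -(1/2) * (t - a)) atTop atBot := by
        refine (tendsto_const_mul_atBot_of_neg (by norm_num : (-(1/2):ℝ) < 0)).2 ?_
        simpa [sub_eq_add_neg] using tendsto_atTop_add_const_right atTop (-a) (tendsto_id (α := ℝ))
      have hexp0 : Tendsto (fun t : ℝ => v a * Real.exp (-(1/2) * (t - a))) atTop (nhds 0) := by
        have := (Real.tendsto_exp_atBot.comp hlin).const_mul (v a)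
        simpa using this
      have hev2 : ∀ᶠ t in atTop, v a * Real.exp (-(1/2) * (t - a)) < c / 3 :=
        hexp0.eventually (eventually_lt_nhds hε)
      filter_upwards [hev2, eventually_ge_atTop a] with t ht1 ht2
      have := hkey t ht2
      linarith
  -- conclude lam → -1
  have habs : Tendsto (fun t => |lam t + 1|) atTop (nhds 0) := by
    have hsq : Tendsto (fun t => Real.sqrt (v t)) atTop (nhds 0) := by
      have := (Real.continuous_sqrt.tendsto 0).comp hv0
      simpa [Function.comp_def] using this
    convert hsq using 2 with t
    simp [hvdef, Real.sqrt_sq_eq_abs]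
  have hnorm : Tendsto (fun t => lam t + 1) atTop (nhds 0) := by
    rw [tendsto_zero_iff_norm_tendsto_zero]
    simpa [Real.norm_eq_abs] using habs
  have := hnorm.sub_const 1
  simpa using this
end

section
/- Assume H is as in the rescaled bicharacteristic system, and let (x, y, λ, μ, ξ) be a C¹ solution of the system on an interval I. Then for all t ∈ I, d/dt ⟨H(x(t),y(t))·μ(t), μ(t)⟩ = 2·(1 + 2λ(t))·⟨H(x(t),y(t))·μ(t), μ(t)⟩ + x(t)·λ(t)·⟨∂ₓH(x(t),y(t))·μ(t), μ(t)⟩; in particular all terms involving the y-derivatives of H cancel. -/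
open Filter Set

noncomputable section

/-- Apply a matrix `A : Fin d → Fin d → ℝ` to a vector. -/
def appF {d : ℕ} (A : Fin d → Fin d → ℝ) (v : Fin d → ℝ) : Fin d → ℝ :=
  fun i => ∑ j, A i j * v j

/-- Euclidean dot product on `Fin d → ℝ`. -/
def dotF {d : ℕ} (v w : Fin d → ℝ) : ℝ := ∑ i, v i * w i

/-- The partial derivative `∂ₓH`. -/
def Hx' {d : ℕ} (H : ℝ → (Fin d → ℝ) → (Fin d → Fin d → ℝ)) (x : ℝ) (y : Fin d → ℝ) :
    Fin d → Fin d → ℝ :=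
  fderiv ℝ (fun p : ℝ × (Fin d → ℝ) => H p.1 p.2) (x, y) (1, 0)

/-- The partial derivative `∂_{yᵢ}H`. -/
def Hy' {d : ℕ} (H : ℝ → (Fin d → ℝ) → (Fin d → Fin d → ℝ)) (i : Fin d) (x : ℝ)
    (y : Fin d → ℝ) : Fin d → Fin d → ℝ :=
  fderiv ℝ (fun p : ℝ × (Fin d → ℝ) => H p.1 p.2) (x, y) (0, Pi.single i 1)

/-- `(x, y, λ, μ, ξ)` is a solution of the rescaled bicharacteristic system for `H`
on the set `I`:  `x' = λx`, `y' = Hμ`, `λ' = λ + λ² − ⟨Hμ,μ⟩ − (x/2)⟨∂ₓH μ,μ⟩`,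
`μᵢ' = (1+2λ)μᵢ − (1/2)⟨∂_{yᵢ}H μ,μ⟩`, `ξ' = (1+2λ)ξ`. -/
def IsBicharSol {d m : ℕ} (H : ℝ → (Fin d → ℝ) → (Fin d → Fin d → ℝ))
    (x lam : ℝ → ℝ) (y μ : ℝ → Fin d → ℝ) (ξ : ℝ → Fin m → ℝ) (I : Set ℝ) : Prop :=
  ∀ t ∈ I,
    HasDerivAt x (lam t * x t) t ∧
    HasDerivAt y (appF (H (x t) (y t)) (μ t)) t ∧
    HasDerivAt lam (lam t + (lam t) ^ 2 - dotF (appF (H (x t) (y t)) (μ t)) (μ t)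
      - x t / 2 * dotF (appF (Hx' H (x t) (y t)) (μ t)) (μ t)) t ∧
    (∀ i, HasDerivAt (fun s => μ s i)
      ((1 + 2 * lam t) * μ t i
        - 1 / 2 * dotF (appF (Hy' H i (x t) (y t)) (μ t)) (μ t)) t) ∧
    HasDerivAt ξ ((1 + 2 * lam t) • ξ t) t

end

/-! By the product rule and the symmetry of `H`, `q = ⟨Hμ, μ⟩` has
`q' = ⟨(H ∘ (x, y))' μ, μ⟩ + 2⟨Hμ, μ'⟩`. Since `y' = Hμ`, the chain rule gives
`(H ∘ (x, y))' = xλ ∂ₓH + ∑ₖ (Hμ)ₖ ∂_{yₖ}H`, whose `y`-part contributes `∑ₖ (Hμ)ₖ ⟨∂_{yₖ}H μ, μ⟩`;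
this is exactly cancelled by the term `-½⟨∂_{yₖ}H μ, μ⟩` of `μₖ'`, counted twice. -/

section QuadraticForm

variable {d : ℕ}

theorem dotF_appF_comm_of_symm {A : Fin d → Fin d → ℝ} (hA : ∀ i j, A i j = A j i)
    (v w : Fin d → ℝ) : dotF (appF A v) w = dotF (appF A w) v := by
  simp only [dotF, appF, Finset.sum_mul]
  rw [Finset.sum_comm]
  exact Finset.sum_congr rfl fun i _ => Finset.sum_congr rfl fun j _ => by rw [hA]; ring

theorem dotF_smul_sub_smul (w v c : Fin d → ℝ) (a b : ℝ) :
    dotF w (fun i => a * v i - b * c i) = a * dotF w v - b * dotF w c := by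
  simp only [dotF, Finset.mul_sum, ← Finset.sum_sub_distrib]
  exact Finset.sum_congr rfl fun i _ => by ring

theorem dotF_appF_smul_add_sum (a : ℝ) (A : Fin d → Fin d → ℝ) {ι : Type*} (s : Finset ι)
    (c : ι → ℝ) (B : ι → Fin d → Fin d → ℝ) (v : Fin d → ℝ) :
    dotF (appF (a • A + ∑ k ∈ s, c k • B k) v) v
      = a * dotF (appF A v) v + ∑ k ∈ s, c k * dotF (appF (B k) v) v := by
  simp only [dotF, appF, Pi.add_apply, Pi.smul_apply, Finset.sum_apply, smul_eq_mul,
    add_mul, Finset.sum_mul, Finset.sum_add_distrib, Finset.mul_sum]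
  congr 1
  · simp only [mul_assoc]
  · rw [Finset.sum_congr rfl fun i _ => Finset.sum_comm, Finset.sum_comm]
    exact Finset.sum_congr rfl fun k _ => Finset.sum_congr rfl fun i _ =>
      Finset.sum_congr rfl fun j _ => by ring

theorem HasDerivAt.dotF_appF {A : ℝ → Fin d → Fin d → ℝ} {A' : Fin d → Fin d → ℝ}
    {v : ℝ → Fin d → ℝ} {v' : Fin d → ℝ} {t : ℝ}
    (hA : HasDerivAt A A' t) (hv : HasDerivAt v v' t) :
    HasDerivAt (fun s => dotF (appF (A s) (v s)) (v s))
      (dotF (appF A' (v t)) (v t) + dotF (appF (A t) v') (v t)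
        + dotF (appF (A t) (v t)) v') t := by
  have hAij i j : HasDerivAt (fun s => A s i j) (A' i j) t :=
    hasDerivAt_pi.mp (hasDerivAt_pi.mp hA i) j
  have hvi i : HasDerivAt (fun s => v s i) (v' i) t := hasDerivAt_pi.mp hv i
  refine (HasDerivAt.fun_sum (u := Finset.univ) fun i _ =>
    (HasDerivAt.fun_sum (u := Finset.univ) fun j _ =>
      (hAij i j).fun_mul (hvi j)).fun_mul (hvi i)).congr_deriv ?_
  simp only [dotF, appF, add_mul, Finset.sum_add_distrib]

end QuadraticForm

theorem hasDerivAt_comp_Hx'_Hy' {d : ℕ} {H : ℝ → (Fin d → ℝ) → (Fin d → Fin d → ℝ)}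
    {x : ℝ → ℝ} {y : ℝ → Fin d → ℝ} {x' : ℝ} {y' : Fin d → ℝ} {t : ℝ}
    (hH : DifferentiableAt ℝ (fun p : ℝ × (Fin d → ℝ) => H p.1 p.2) (x t, y t))
    (hx : HasDerivAt x x' t) (hy : HasDerivAt y y' t) :
    HasDerivAt (fun s => H (x s) (y s))
      (x' • Hx' H (x t) (y t) + ∑ k, y' k • Hy' H k (x t) (y t)) t := by
  have hbasis : ((x', y') : ℝ × (Fin d → ℝ))
      = x' • ((1 : ℝ), (0 : Fin d → ℝ))
        + ∑ k, y' k • ((0 : ℝ), (Pi.single k 1 : Fin d → ℝ)) := by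
    ext <;> simp [Prod.fst_sum, Prod.snd_sum, Finset.sum_apply, Pi.single_apply]
  have hchain := hH.hasFDerivAt.comp_hasDerivAt t (hx.prodMk hy)
  simp only [hbasis, map_add, map_smul, map_sum] at hchain
  exact hchain

theorem stmt8_general (n m : ℕ)
    (H : ℝ → (Fin (n - 1) → ℝ) → (Fin (n - 1) → Fin (n - 1) → ℝ))
    (hH : ContDiff ℝ 1 (fun p : ℝ × (Fin (n - 1) → ℝ) => H p.1 p.2))
    (hsymm : ∀ x y, ∀ i j, H x y i j = H x y j i)
    (x lam : ℝ → ℝ) (y μ : ℝ → Fin (n - 1) → ℝ) (ξ : ℝ → Fin m → ℝ)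
    (I : Set ℝ) (hsol : IsBicharSol H x lam y μ ξ I) :
    ∀ t ∈ I,
      HasDerivAt (fun s => dotF (appF (H (x s) (y s)) (μ s)) (μ s))
        (2 * (1 + 2 * lam t) * dotF (appF (H (x t) (y t)) (μ t)) (μ t)
          + x t * lam t * dotF (appF (Hx' H (x t) (y t)) (μ t)) (μ t)) t := by
  intro t ht
  obtain ⟨hx, hy, -, hμ, -⟩ := hsol t ht
  have hHt := hasDerivAt_comp_Hx'_Hy' (hH.differentiable one_ne_zero).differentiableAt hx hy
  refine (hHt.dotF_appF (hasDerivAt_pi.mpr hμ)).congr_deriv ?_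
  rw [dotF_appF_comm_of_symm (hsymm _ _) _ (μ t), dotF_appF_smul_add_sum, dotF_smul_sub_smul]
  simp only [dotF]
  ring

/-- Evolution of the squared angular momentum `q(t) = ⟨H(x,y)μ, μ⟩` along a solution of
the rescaled bicharacteristic system: `q' = 2(1+2λ)q + xλ·⟨∂ₓH μ, μ⟩`; in particular
all terms involving the `y`-derivatives of `H` cancel. -/
theorem stmt8 (n m : ℕ) (hn : 2 ≤ n) (hm : 1 ≤ m)
    (H : ℝ → (Fin (n - 1) → ℝ) → (Fin (n - 1) → Fin (n - 1) → ℝ))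
    (hH : ContDiff ℝ 1 (fun p : ℝ × (Fin (n - 1) → ℝ) => H p.1 p.2))
    (hsymm : ∀ x y, ∀ i j, H x y i j = H x y j i)
    (x lam : ℝ → ℝ) (y μ : ℝ → Fin (n - 1) → ℝ) (ξ : ℝ → Fin m → ℝ)
    (I : Set ℝ) (hsol : IsBicharSol H x lam y μ ξ I) :
    ∀ t ∈ I,
      HasDerivAt (fun s => dotF (appF (H (x s) (y s)) (μ s)) (μ s))
        (2 * (1 + 2 * lam t) * dotF (appF (H (x t) (y t)) (μ t)) (μ t)
          + x t * lam t * dotF (appF (Hx' H (x t) (y t)) (μ t)) (μ t)) t :=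
  stmt8_general n m H hH hsymm x lam y μ ξ I hsol
end

section
/- Let c ∈ ℝ and let f, g : [0,1] → ℂ be smooth (C^∞). Suppose a : (0,1] → ℂ is differentiable and satisfies x·a'(x) = (c + x·f(x))·a(x) + x^{c+1}·g(x) for all x ∈ (0,1]. Then there is a smooth function ã : [0,1] → ℂ such that a(x) = x^c·ã(x) for all x ∈ (0,1]. -/
open Set

open Metric
open scoped Topology

lemma auxContDiffOn {h H : ℝ → ℂ}
    (hA : ContDiffOn ℝ (⊤ : ℕ∞) h (Icc 0 1))
    (hH : ∀ y, HasDerivAt H (h y) y) :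
    ContDiffOn ℝ (⊤ : ℕ∞) H (Icc 0 1) := by
  have hu : UniqueDiffOn ℝ (Icc (0:ℝ) 1) := uniqueDiffOn_Icc zero_lt_one
  rw [contDiffOn_infty_iff_derivWithin hu]
  refine ⟨fun y _ => (hH y).differentiableAt.differentiableWithinAt, ?_⟩
  refine hA.congr (fun y hy => ?_)
  exact (hH y).hasDerivWithinAt.derivWithin (hu y hy)

/-- Regular singular point regularity: if `a` solves
`x·a'(x) = (c + x·f(x))·a(x) + x^{c+1}·g(x)` on `(0,1]` with `f, g` smooth on `[0,1]`,
then `a(x) = x^c·ã(x)` for some `ã` smooth on `[0,1]`. -/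
theorem stmt10 (c : ℝ) (f g : ℝ → ℂ)
    (hf : ContDiffOn ℝ (⊤ : ℕ∞) f (Icc 0 1)) (hg : ContDiffOn ℝ (⊤ : ℕ∞) g (Icc 0 1))
    (a : ℝ → ℂ)
    (hdiff : ∀ x ∈ Ioc (0 : ℝ) 1, DifferentiableAt ℝ a x)
    (heq : ∀ x ∈ Ioc (0 : ℝ) 1,
      (x : ℂ) * deriv a x = ((c : ℂ) + (x : ℂ) * f x) * a x + ((x ^ (c + 1) : ℝ) : ℂ) * g x) :
    ∃ atil : ℝ → ℂ, ContDiffOn ℝ (⊤ : ℕ∞) atil (Icc 0 1) ∧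
      ∀ x ∈ Ioc (0 : ℝ) 1, a x = ((x ^ c : ℝ) : ℂ) * atil x := by
  classical
  set cl : ℝ → ℝ := fun t => max 0 (min t 1) with hcl
  have hclmem : ∀ t, cl t ∈ Icc (0:ℝ) 1 :=
    fun t => ⟨le_max_left _ _, max_le (by norm_num) (min_le_right _ _)⟩
  have hclid : ∀ t ∈ Icc (0:ℝ) 1, cl t = t := by
    intro t ht
    rw [hcl]
    dsimp only
    rw [min_eq_left ht.2, max_eq_right ht.1]
  have hclcont : Continuous cl := continuous_const.max (continuous_id.min continuous_const)
  set fc : ℝ → ℂ := fun t => f (cl t) with hfcdef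
  set gc : ℝ → ℂ := fun t => g (cl t) with hgcdef
  have hfceq : EqOn fc f (Icc 0 1) := by
    intro t ht; rw [hfcdef]; dsimp only; rw [hclid t ht]
  have hgceq : EqOn gc g (Icc 0 1) := by
    intro t ht; rw [hgcdef]; dsimp only; rw [hclid t ht]
  have hfcont : Continuous fc := hf.continuousOn.comp_continuous hclcont hclmem
  have hgcont : Continuous gc := hg.continuousOn.comp_continuous hclcont hclmem
  have hfA : ContDiffOn ℝ (⊤ : ℕ∞) fc (Icc 0 1) := hf.congr hfceq
  have hgA : ContDiffOn ℝ (⊤ : ℕ∞) gc (Icc 0 1) := hg.congr hgceq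
  -- the primitive F
  set F : ℝ → ℂ := fun x => ∫ t in (1:ℝ)..x, fc t with hFdef
  have hFd : ∀ x, HasDerivAt F (fc x) x := fun x =>
    intervalIntegral.integral_hasDerivAt_right (hfcont.intervalIntegrable _ _)
      (hfcont.stronglyMeasurableAtFilter _ _) hfcont.continuousAt
  have hFA : ContDiffOn ℝ (⊤ : ℕ∞) F (Icc 0 1) := auxContDiffOn hfA hFd
  have hFcont : Continuous F := continuous_iff_continuousAt.2 fun x => (hFd x).continuousAt
  -- integrand e and primitive G
  set e : ℝ → ℂ := fun t => Complex.exp (-F t) * gc t with hedef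
  have heA : ContDiffOn ℝ (⊤ : ℕ∞) e (Icc 0 1) := by
    have h1 : ContDiffOn ℝ (⊤ : ℕ∞) (fun t => Complex.exp (-F t)) (Icc 0 1) :=
      hFA.neg.cexp
    exact h1.mul hgA
  have hecont : Continuous e := (hFcont.neg.cexp).mul hgcont
  set G : ℝ → ℂ := fun x => ∫ t in (1:ℝ)..x, e t with hGdef
  have hGd : ∀ x, HasDerivAt G (e x) x := fun x =>
    intervalIntegral.integral_hasDerivAt_right (hecont.intervalIntegrable _ _)
      (hecont.stronglyMeasurableAtFilter _ _) hecont.continuousAt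
  have hGA : ContDiffOn ℝ (⊤ : ℕ∞) G (Icc 0 1) := auxContDiffOn heA hGd
  -- atil
  set atil : ℝ → ℂ := fun x => Complex.exp (F x) * (a 1 + G x) with hatildef
  have hatilA : ContDiffOn ℝ (⊤ : ℕ∞) atil (Icc 0 1) := by
    have h1 : ContDiffOn ℝ (⊤ : ℕ∞) (fun t => Complex.exp (F t)) (Icc 0 1) :=
      hFA.cexp
    exact h1.mul (contDiffOn_const.add hGA)
  have hatild : ∀ x, HasDerivAt atil (fc x * atil x + gc x) x := by
    intro x
    have h1 : HasDerivAt (fun y => Complex.exp (F y)) (Complex.exp (F x) * fc x) x :=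
      (hFd x).cexp
    have h2 : HasDerivAt (fun y => a 1 + G y) (e x) x := (hGd x).const_add (a 1)
    have h3 := h1.mul h2
    have hxx : Complex.exp (F x) * Complex.exp (-F x) = 1 := by
      rw [← Complex.exp_add]; simp
    convert h3 using 1
    case e'_4 => rfl
    case e'_8 => rfl
    rw [hatildef, hedef]
    dsimp only
    calc fc x * (Complex.exp (F x) * (a 1 + G x)) + gc x
        = Complex.exp (F x) * fc x * (a 1 + G x)
            + (Complex.exp (F x) * Complex.exp (-F x)) * gc x := by rw [hxx]; ring
      _ = _ := by ring
  -- Lipschitz bound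
  obtain ⟨C, hC⟩ := (isCompact_Icc (a := (0:ℝ)) (b := 1)).exists_bound_of_continuousOn
    hf.continuousOn
  have hC0 : 0 ≤ C := le_trans (norm_nonneg _) (hC 0 ⟨le_refl 0, by norm_num⟩)
  have hlip : ∀ t, LipschitzOnWith (Real.toNNReal C) (fun y : ℂ => fc t * y + gc t) univ := by
    intro t
    apply LipschitzWith.lipschitzOnWith
    apply LipschitzWith.of_dist_le_mul
    intro y z
    rw [dist_eq_norm, dist_eq_norm]
    have h1 : fc t * y + gc t - (fc t * z + gc t) = fc t * (y - z) := by ring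
    rw [h1, norm_mul]
    have h2 : ‖fc t‖ ≤ Real.toNNReal C := by
      rw [Real.coe_toNNReal C hC0]
      exact hC (cl t) (hclmem t)
    exact mul_le_mul_of_nonneg_right h2 (norm_nonneg _)
  -- the solution b
  have hbd : ∀ t ∈ Ioc (0:ℝ) 1,
      HasDerivAt (fun x => ((x ^ (-c) : ℝ) : ℂ) * a x)
        (fc t * (((t ^ (-c) : ℝ) : ℂ) * a t) + gc t) t := by
    intro t ht
    have ht0 : (0:ℝ) < t := ht.1
    have htne : (t:ℂ) ≠ 0 := by exact_mod_cast ht0.ne'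
    have hr : HasDerivAt (fun s : ℝ => s ^ (-c)) (-c * t ^ (-c - 1)) t :=
      Real.hasDerivAt_rpow_const (Or.inl ht0.ne')
    have hrC : HasDerivAt (fun s : ℝ => ((s ^ (-c) : ℝ) : ℂ))
        ((-c * t ^ (-c - 1) : ℝ) : ℂ) t := hr.ofReal_comp
    have ha' : HasDerivAt a (deriv a t) t := (hdiff t ht).hasDerivAt
    have hmul := hrC.mul ha'
    convert hmul using 1
    case e'_4 => rfl
    case e'_8 => rfl
    have key := heq t ht
    have htIcc : t ∈ Icc (0:ℝ) 1 := ⟨ht0.le, ht.2⟩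
    rw [hfceq htIcc, hgceq htIcc]
    have e1 : (t:ℂ) * ((t ^ (-c - 1) : ℝ) : ℂ) = ((t ^ (-c) : ℝ) : ℂ) := by
      rw [← Complex.ofReal_mul]
      congr 1
      nth_rewrite 1 [← Real.rpow_one t]
      rw [← Real.rpow_add ht0]
      ring_nf
    have e2 : ((t ^ (-c) : ℝ) : ℂ) * ((t ^ (c + 1) : ℝ) : ℂ) = (t:ℂ) := by
      rw [← Complex.ofReal_mul, ← Real.rpow_add ht0]
      norm_num
    apply mul_left_cancel₀ htne
    push_cast
    linear_combination (-(((t ^ (-c) : ℝ)) : ℂ)) * key + (c:ℂ) * a t * e1 + (-(g t)) * e2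
  refine ⟨atil, hatilA, ?_⟩
  intro x hx
  have hb1 : (fun x => ((x ^ (-c) : ℝ) : ℂ) * a x) 1 = atil 1 := by
    have hF1 : F 1 = 0 := intervalIntegral.integral_same
    have hG1 : G 1 = 0 := intervalIntegral.integral_same
    simp [hatildef, hF1, hG1, Real.one_rpow]
  have hcontb : ContinuousOn (fun x => ((x ^ (-c) : ℝ) : ℂ) * a x) (Icc x 1) := by
    intro t ht'
    have ht : t ∈ Ioc (0:ℝ) 1 := ⟨lt_of_lt_of_le hx.1 ht'.1, ht'.2⟩
    exact ((hbd t ht).continuousAt).continuousWithinAt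
  have hconta : ContinuousOn atil (Icc x 1) :=
    fun t _ => ((hatild t).continuousAt).continuousWithinAt
  have key := ODE_solution_unique_of_mem_Icc_left (v := fun t y => fc t * y + gc t)
    (s := fun _ => (univ : Set ℂ)) (fun t _ => hlip t) hcontb
    (fun t ht' => ((hbd t ⟨hx.1.trans ht'.1, ht'.2⟩).hasDerivWithinAt))
    (fun t _ => mem_univ _) hconta
    (fun t _ => (hatild t).hasDerivWithinAt) (fun t _ => mem_univ _) hb1
  have hbx := key (left_mem_Icc.2 hx.2)
  have hone : ((x ^ c : ℝ) : ℂ) * ((x ^ (-c) : ℝ) : ℂ) = 1 := by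
    rw [← Complex.ofReal_mul, ← Real.rpow_add hx.1]
    norm_num
  calc a x = (((x ^ c : ℝ) : ℂ) * ((x ^ (-c) : ℝ) : ℂ)) * a x := by rw [hone, one_mul]
    _ = ((x ^ c : ℝ) : ℂ) * (((x ^ (-c) : ℝ) : ℂ) * a x) := by ring
    _ = ((x ^ c : ℝ) : ℂ) * atil x := by rw [← hbx]
end

section
/- Let κ, c ∈ ℝ and let b : (0,∞) → ℂ be continuous such that for every N ∈ ℕ there is C_N with |b(t)| ≤ C_N·t^N for all t ∈ (0,1]. Define a(t) = i·t^{κ}·e^{ic/t}·∫₀ᵗ e^{−ic/s}·b(s)·s^{−κ−2} ds for t > 0. Then: (i) the integral converges absolutely for every t > 0; (ii) a is differentiable on (0,∞) and satisfies −i·t²·a'(t) + i·κ·t·a(t) + c·a(t) = b(t) for all t > 0; (iii) for every N ∈ ℕ there is C'_N with |a(t)| ≤ C'_N·t^N for all t ∈ (0,1]. -/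
open Complex MeasureTheory Set

/-! Variation of constants: `w(t) = i t^κ e^{ic/t}` solves the homogeneous equation
`(t²D_t + iκt + c) w = 0`, and `w(t) · e^{-ic/t} b(t) t^{-κ-2} = i b(t) / t²`, so by the product
rule `a = w · ∫₀ᵗ e^{-ic/s} b(s) s^{-κ-2} ds` solves the equation. Since `|w(t)| = t^κ` and the
integrand has modulus `|b(s)| s^{-κ-2}`, multiplying by these powers and integrating from `0`
only shift the exponents in the bounds `C_N t^N`; so infinite-order vanishing passes from `b` to
the integrand (which makes it integrable at `0`) and then to `a`. -/

def RapidDecayAtZero {E : Type*} [Norm E] (g : ℝ → E) : Prop :=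
  ∀ N : ℕ, ∃ C : ℝ, ∀ t ∈ Ioc (0 : ℝ) 1, ‖g t‖ ≤ C * t ^ N

namespace RapidDecayAtZero

variable {E F : Type*} [NormedAddCommGroup E] [NormedAddCommGroup F]

theorem of_norm_le_rpow_mul {f : ℝ → E} {g : ℝ → F} (hg : RapidDecayAtZero g) (α : ℝ)
    (hfg : ∀ t ∈ Ioc (0 : ℝ) 1, ‖f t‖ ≤ t ^ α * ‖g t‖) : RapidDecayAtZero f := by
  intro N
  obtain ⟨C, hC⟩ := hg (N + ⌈|α|⌉₊)
  refine ⟨|C|, fun t ht => ?_⟩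
  have ht0 : 0 < t := ht.1
  have hexp : (N : ℝ) ≤ α + ↑(N + ⌈|α|⌉₊) := by
    push_cast
    linarith [Nat.le_ceil |α|, neg_abs_le α]
  have hgt : ‖g t‖ ≤ |C| * t ^ (N + ⌈|α|⌉₊) :=
    (hC t ht).trans (mul_le_mul_of_nonneg_right (le_abs_self C) (by positivity))
  calc ‖f t‖ ≤ t ^ α * (|C| * t ^ (N + ⌈|α|⌉₊)) :=
        (hfg t ht).trans (mul_le_mul_of_nonneg_left hgt (by positivity))
    _ = |C| * t ^ (α + ↑(N + ⌈|α|⌉₊)) := by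
        rw [Real.rpow_add ht0, Real.rpow_natCast]; ring
    _ ≤ |C| * t ^ (N : ℝ) :=
        mul_le_mul_of_nonneg_left (Real.rpow_le_rpow_of_exponent_ge ht0 ht.2 hexp)
          (abs_nonneg C)
    _ = |C| * t ^ N := by rw [Real.rpow_natCast]

theorem integrableOn_Ioc {g : ℝ → E} (hg : RapidDecayAtZero g) (hc : ContinuousOn g (Ioi 0))
    {t : ℝ} : IntegrableOn g (Ioc 0 t) := by
  obtain ⟨C, hC⟩ := hg 0
  have hnear : IntegrableOn g (Ioc 0 1) :=
    .of_bound measure_Ioc_lt_top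
      ((hc.mono fun s hs => hs.1).aestronglyMeasurable measurableSet_Ioc) C
      ((ae_restrict_mem measurableSet_Ioc).mono fun s hs => by simpa using hC s hs)
  have hfar : IntegrableOn g (Icc 1 t) :=
    (hc.mono fun s hs => zero_lt_one.trans_le hs.1).integrableOn_Icc
  refine (hnear.union hfar).mono_set fun s hs => ?_
  rcases le_total s 1 with h | h
  exacts [Or.inl ⟨hs.1, h⟩, Or.inr ⟨h, hs.2⟩]

variable [NormedSpace ℝ E]

theorem integral_Ioc {g : ℝ → E} (hg : RapidDecayAtZero g) :
    RapidDecayAtZero fun t => ∫ s in Ioc (0 : ℝ) t, g s := by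
  intro N
  obtain ⟨C, hC⟩ := hg N
  refine ⟨|C|, fun t ht => ?_⟩
  have hbound : ∀ s ∈ Ioc (0 : ℝ) t, ‖g s‖ ≤ |C| * t ^ N := fun s hs =>
    (hC s ⟨hs.1, hs.2.trans ht.2⟩).trans <|
      (mul_le_mul_of_nonneg_right (le_abs_self C) (pow_nonneg hs.1.le N)).trans
        (mul_le_mul_of_nonneg_left (pow_le_pow_left₀ hs.1.le hs.2 N) (abs_nonneg C))
  calc ‖∫ s in Ioc (0 : ℝ) t, g s‖ ≤ |C| * t ^ N * volume.real (Ioc 0 t) :=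
        norm_setIntegral_le_of_norm_le_const measure_Ioc_lt_top hbound
    _ = |C| * t ^ N * t := by simp [ht.1.le]
    _ ≤ |C| * t ^ N :=
        mul_le_of_le_one_right (mul_nonneg (abs_nonneg C) (pow_nonneg ht.1.le N)) ht.2

end RapidDecayAtZero

theorem hasDerivAt_integral_Ioc_zero {E : Type*} [NormedAddCommGroup E] [NormedSpace ℝ E]
    [CompleteSpace E] {f : ℝ → E} {t : ℝ} (hc : ContinuousOn f (Ioi 0))
    (hint : IntegrableOn f (Ioc 0 t)) (ht : 0 < t) :
    HasDerivAt (fun u => ∫ s in Ioc (0 : ℝ) u, f s) (f t) t := by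
  have hr : 0 < t / 2 := by positivity
  have hrt : t / 2 < t := by linarith
  have hfar : ∀ u, IntegrableOn f (Ioc (t / 2) u) := fun u =>
    (hc.mono fun s hs => hr.trans_le hs.1).integrableOn_Icc.mono_set Ioc_subset_Icc_self
  have hnear : IntegrableOn f (Ioc 0 (t / 2)) := hint.mono_set (Ioc_subset_Ioc_right hrt.le)
  have hII : IntervalIntegrable f volume (t / 2) t :=
    (intervalIntegrable_iff_integrableOn_Ioc_of_le hrt.le).2 (hfar t)
  refine ((intervalIntegral.integral_hasDerivAt_right hII
      (hc.stronglyMeasurableAtFilter isOpen_Ioi t ht)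
      (hc.continuousAt (isOpen_Ioi.mem_nhds ht))).const_add
      (∫ s in Ioc (0 : ℝ) (t / 2), f s)).congr_of_eventuallyEq ?_
  filter_upwards [Ioi_mem_nhds hrt] with u hu
  rw [intervalIntegral.integral_of_le hu.le, ← setIntegral_union (Ioc_disjoint_Ioc_of_le le_rfl)
    measurableSet_Ioc hnear (hfar u), Ioc_union_Ioc_eq_Ioc hr.le hu.le]

noncomputable def transportHomogeneous (κ c t : ℝ) : ℂ :=
  I * ((t ^ κ : ℝ) : ℂ) * exp (I * c / t)

noncomputable def transportIntegrand (κ c : ℝ) (b : ℝ → ℂ) (s : ℝ) : ℂ :=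
  exp (-I * c / s) * b s * ((s ^ (-κ - 2) : ℝ) : ℂ)

variable {κ c : ℝ} {b : ℝ → ℂ}

theorem norm_transportHomogeneous_mul {t : ℝ} (ht : 0 ≤ t) (z : ℂ) :
    ‖transportHomogeneous κ c t * z‖ = t ^ κ * ‖z‖ := by
  simp [transportHomogeneous, Complex.norm_exp, abs_of_nonneg (Real.rpow_nonneg ht κ)]

theorem norm_transportIntegrand {s : ℝ} (hs : 0 ≤ s) :
    ‖transportIntegrand κ c b s‖ = s ^ (-κ - 2) * ‖b s‖ := by
  simp [transportIntegrand, Complex.norm_exp, abs_of_nonneg (Real.rpow_nonneg hs _), mul_comm]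

theorem continuousOn_transportIntegrand (hb : ContinuousOn b (Ioi 0)) :
    ContinuousOn (transportIntegrand κ c b) (Ioi 0) := by
  unfold transportIntegrand
  fun_prop (disch := intro s hs; simp_all [ne_of_gt])

theorem hasDerivAt_transportHomogeneous {t : ℝ} (ht : 0 < t) :
    HasDerivAt (transportHomogeneous κ c)
      (transportHomogeneous κ c t * (κ / t - I * c / t ^ 2)) t := by
  have ht' : (t : ℂ) ≠ 0 := by exact_mod_cast ht.ne'
  have hcoe : HasDerivAt (fun u : ℝ => (u : ℂ)) 1 t := by
    simpa using (hasDerivAt_id t).ofReal_comp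
  have hpow : HasDerivAt (fun u : ℝ => I * ((u ^ κ : ℝ) : ℂ))
      (I * ((κ * t ^ (κ - 1) : ℝ) : ℂ)) t :=
    ((Real.hasDerivAt_rpow_const (Or.inl ht.ne')).ofReal_comp).const_mul I
  have hexp : HasDerivAt (fun u : ℝ => exp (I * c / u))
      (exp (I * c / t) * ((0 * t - I * c * 1) / (t : ℂ) ^ 2)) t :=
    ((hasDerivAt_const t (I * (c : ℂ))).div hcoe ht').cexp
  refine (hpow.mul hexp).congr_deriv ?_
  simp only [transportHomogeneous, Real.rpow_sub_one ht.ne', ofReal_mul, ofReal_div]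
  field_simp
  ring

theorem transportHomogeneous_mul_transportIntegrand {t : ℝ} (ht : 0 < t) :
    transportHomogeneous κ c t * transportIntegrand κ c b t = I * b t / t ^ 2 := by
  have hpow : t ^ κ * t ^ (-κ - 2) = (t ^ 2)⁻¹ := by
    rw [← Real.rpow_add ht, show κ + (-κ - 2) = -(2 : ℕ) by ring, Real.rpow_neg ht.le,
      Real.rpow_natCast]
  have hexp : exp (I * c / t) * exp (-I * c / t) = 1 := by
    rw [← Complex.exp_add, ← add_div, ← add_mul, add_neg_cancel, zero_mul, zero_div, exp_zero]
  calc transportHomogeneous κ c t * transportIntegrand κ c b t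
      = I * b t * ((t ^ κ * t ^ (-κ - 2) : ℝ) : ℂ) * (exp (I * c / t) * exp (-I * c / t)) := by
        simp only [transportHomogeneous, transportIntegrand, ofReal_mul]; ring
    _ = I * b t / t ^ 2 := by rw [hpow, hexp]; push_cast; ring

theorem transportEquation_of_hasDerivAt {F : ℝ → ℂ} {t : ℝ} (ht : 0 < t)
    (hF : HasDerivAt F (transportIntegrand κ c b t) t) :
    DifferentiableAt ℝ (fun u => transportHomogeneous κ c u * F u) t ∧
      -I * (t : ℂ) ^ 2 * deriv (fun u => transportHomogeneous κ c u * F u) t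
        + I * κ * t * (transportHomogeneous κ c t * F t)
        + c * (transportHomogeneous κ c t * F t) = b t := by
  have hD : HasDerivAt (fun u => transportHomogeneous κ c u * F u) _ t :=
    (hasDerivAt_transportHomogeneous ht).mul hF
  refine ⟨hD.differentiableAt, ?_⟩
  have ht' : (t : ℂ) ≠ 0 := by exact_mod_cast ht.ne'
  rw [hD.deriv, transportHomogeneous_mul_transportIntegrand ht]
  field_simp
  linear_combination (c * transportHomogeneous κ c t * F t - b t) * I_sq

/-- The model transport equation near spatial infinity: with `b` continuous on `(0,∞)`
and vanishing to infinite order at `t = 0`, the function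
`a(t) = i·t^κ·e^{ic/t}·∫₀ᵗ e^{−ic/s}·b(s)·s^{−κ−2} ds` is well defined (the integral
converges absolutely), differentiable, solves `(t²D_t + iκt + c)a = b`, i.e.
`−i·t²·a'(t) + i·κ·t·a(t) + c·a(t) = b(t)`, and vanishes to infinite order at `t = 0`. -/
theorem stmt11 (κ c : ℝ) (b : ℝ → ℂ)
    (hbc : ContinuousOn b (Ioi 0))
    (hb : ∀ N : ℕ, ∃ C : ℝ, ∀ t ∈ Ioc (0 : ℝ) 1, ‖b t‖ ≤ C * t ^ N)
    (a : ℝ → ℂ)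
    (ha : a = fun t : ℝ => Complex.I * ((t ^ κ : ℝ) : ℂ) * Complex.exp (Complex.I * c / t) *
      ∫ s in Ioc (0 : ℝ) t, Complex.exp (-Complex.I * c / s) * b s * ((s ^ (-κ - 2) : ℝ) : ℂ)) :
    (∀ t > (0 : ℝ), IntegrableOn
        (fun s : ℝ => Complex.exp (-Complex.I * c / s) * b s * ((s ^ (-κ - 2) : ℝ) : ℂ))
        (Ioc 0 t)) ∧
    (∀ t > (0 : ℝ), DifferentiableAt ℝ a t ∧
        -Complex.I * (t : ℂ) ^ 2 * deriv a t + Complex.I * κ * t * a t + c * a t = b t) ∧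
    (∀ N : ℕ, ∃ C' : ℝ, ∀ t ∈ Ioc (0 : ℝ) 1, ‖a t‖ ≤ C' * t ^ N) := by
  subst ha
  have hf_cont : ContinuousOn (transportIntegrand κ c b) (Ioi 0) :=
    continuousOn_transportIntegrand hbc
  have hf_decay : RapidDecayAtZero (transportIntegrand κ c b) :=
    RapidDecayAtZero.of_norm_le_rpow_mul hb (-κ - 2) fun s hs =>
      (norm_transportIntegrand hs.1.le).le
  have hint (t : ℝ) : IntegrableOn (transportIntegrand κ c b) (Ioc 0 t) :=
    hf_decay.integrableOn_Ioc hf_cont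
  refine ⟨fun t _ => hint t, fun t ht => ?_, ?_⟩
  · exact transportEquation_of_hasDerivAt ht (hasDerivAt_integral_Ioc_zero hf_cont (hint t) ht)
  · exact hf_decay.integral_Ioc.of_norm_le_rpow_mul κ fun t ht =>
      (norm_transportHomogeneous_mul ht.1.le _).le
end

section
/- Assume H is as in the rescaled bicharacteristic system, and let (x, y, λ, μ, ξ) be a C¹ solution of the system on an interval I with x(t) > 0 for all t ∈ I. Define Λ = (λ+1)/x, M = μ/x, Ξ = ξ/x. Then on I: x' = −x + Λ·x²; y' = x·H(x,y)·M; Λ' = −x·⟨H(x,y)M, M⟩ − (x²/2)·⟨∂ₓH(x,y)M, M⟩; M_i' = x·( Λ·M_i − (1/2)·⟨∂_{y_i}H(x,y)M, M⟩ ) for i = 1,…,n−1; Ξ' = x·Λ·Ξ. -/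
open Filter Set

/-!
Since `x' = λx`, the quotient rule reads `(f/x)' = (f' − λf)/x` for every `f`. Applied to
`f = λ + 1`, `μ`, `ξ`, and combined with `⟨A(v/x), v/x⟩ = ⟨Av, v⟩/x²`, it turns each equation
of the system into `x` times an expression in the blown-up variables `Λ, M, Ξ`.
-/

lemma appF_div {d : ℕ} (A : Fin d → Fin d → ℝ) (v : Fin d → ℝ) (c : ℝ) :
    appF A (fun i => v i / c) = fun i => appF A v i / c := by
  funext i
  simp only [appF, Finset.sum_div, mul_div_assoc]

lemma dotF_div_div {d : ℕ} (v w : Fin d → ℝ) (c : ℝ) :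
    dotF (fun i => v i / c) (fun i => w i / c) = dotF v w / c ^ 2 := by
  simp only [dotF, Finset.sum_div, div_mul_div_comm, sq]

lemma dotF_appF_div {d : ℕ} (A : Fin d → Fin d → ℝ) (v : Fin d → ℝ) (c : ℝ) :
    dotF (appF A (fun i => v i / c)) (fun i => v i / c) = dotF (appF A v) v / c ^ 2 := by
  rw [appF_div, dotF_div_div]

theorem HasDerivAt.inv_smul_of_hasDerivAt_mul {E : Type*} [NormedAddCommGroup E]
    [NormedSpace ℝ E] {x : ℝ → ℝ} {f : ℝ → E} {l t : ℝ} {f' : E}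
    (hf : HasDerivAt f f' t) (hx : HasDerivAt x (l * x t) t) (hx0 : x t ≠ 0) :
    HasDerivAt (fun s => (x s)⁻¹ • f s) ((x t)⁻¹ • (f' - l • f t)) t := by
  refine ((hx.inv hx0).smul hf).congr_deriv ?_
  have hcoef : -(l * x t) / x t ^ 2 = -((x t)⁻¹ * l) := by field_simp
  rw [hcoef, Pi.inv_apply, smul_sub, neg_smul, mul_smul, sub_eq_add_neg, add_comm]

theorem HasDerivAt.div_of_hasDerivAt_mul {x f : ℝ → ℝ} {l t f' : ℝ}
    (hf : HasDerivAt f f' t) (hx : HasDerivAt x (l * x t) t) (hx0 : x t ≠ 0) :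
    HasDerivAt (fun s => f s / x s) ((f' - l * f t) / x t) t := by
  simpa only [smul_eq_mul, div_eq_inv_mul] using hf.inv_smul_of_hasDerivAt_mul hx hx0

theorem stmt12_general (n m : ℕ)
    (H : ℝ → (Fin (n - 1) → ℝ) → (Fin (n - 1) → Fin (n - 1) → ℝ))
    (x lam : ℝ → ℝ) (y μ : ℝ → Fin (n - 1) → ℝ) (ξ : ℝ → Fin m → ℝ)
    (I : Set ℝ) (hsol : IsBicharSol H x lam y μ ξ I)
    (hxpos : ∀ t ∈ I, 0 < x t) :
    ∀ t ∈ I,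
      HasDerivAt x (-x t + (lam t + 1) / x t * x t ^ 2) t ∧
      HasDerivAt y (x t • appF (H (x t) (y t)) (fun i => μ t i / x t)) t ∧
      HasDerivAt (fun s => (lam s + 1) / x s)
        (-(x t) * dotF (appF (H (x t) (y t)) (fun i => μ t i / x t)) (fun i => μ t i / x t)
          - x t ^ 2 / 2 *
            dotF (appF (Hx' H (x t) (y t)) (fun i => μ t i / x t)) (fun i => μ t i / x t)) t ∧
      (∀ i, HasDerivAt (fun s => μ s i / x s)
        (x t * ((lam t + 1) / x t * (μ t i / x t)
          - 1 / 2 *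
            dotF (appF (Hy' H i (x t) (y t)) (fun j => μ t j / x t))
              (fun j => μ t j / x t))) t) ∧
      HasDerivAt (fun s => (x s)⁻¹ • ξ s)
        ((x t * ((lam t + 1) / x t)) • ((x t)⁻¹ • ξ t)) t := by
  intro t ht
  obtain ⟨hx, hy, hlam, hμ, hξ⟩ := hsol t ht
  have hx0 : x t ≠ 0 := (hxpos t ht).ne'
  refine ⟨hx.congr_deriv (by field_simp; ring), hy.congr_deriv ?_, ?_, fun i => ?_, ?_⟩
  · rw [appF_div]
    funext i
    simp only [Pi.smul_apply, smul_eq_mul]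
    field_simp
  · refine ((hlam.add_const 1).div_of_hasDerivAt_mul hx hx0).congr_deriv ?_
    rw [dotF_appF_div, dotF_appF_div]
    field_simp
    ring
  · refine ((hμ i).div_of_hasDerivAt_mul hx hx0).congr_deriv ?_
    rw [dotF_appF_div]
    field_simp
    ring
  · refine (hξ.inv_smul_of_hasDerivAt_mul hx hx0).congr_deriv ?_
    rw [mul_div_cancel₀ _ hx0, ← sub_smul, smul_comm]
    congr 1
    ring

/-- The rescaled bicharacteristic system in the blow-up coordinates
`Λ = (λ+1)/x`, `M = μ/x`, `Ξ = ξ/x`: one has `x' = −x + Λx²`, `y' = x·H·M`,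
`Λ' = −x⟨HM,M⟩ − (x²/2)⟨∂ₓH M,M⟩`, `Mᵢ' = x(ΛMᵢ − (1/2)⟨∂_{yᵢ}H M,M⟩)`, `Ξ' = xΛΞ`;
i.e. the rescaled Hamilton vector field is `x` times a vector field smooth up to and
transverse to the front face of the blow-up. -/
theorem stmt12 (n m : ℕ) (hn : 2 ≤ n) (hm : 1 ≤ m)
    (H : ℝ → (Fin (n - 1) → ℝ) → (Fin (n - 1) → Fin (n - 1) → ℝ))
    (hH : ContDiff ℝ 1 (fun p : ℝ × (Fin (n - 1) → ℝ) => H p.1 p.2))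
    (hsymm : ∀ x y, ∀ i j, H x y i j = H x y j i)
    (x lam : ℝ → ℝ) (y μ : ℝ → Fin (n - 1) → ℝ) (ξ : ℝ → Fin m → ℝ)
    (I : Set ℝ) (hsol : IsBicharSol H x lam y μ ξ I)
    (hxpos : ∀ t ∈ I, 0 < x t) :
    ∀ t ∈ I,
      HasDerivAt x (-x t + (lam t + 1) / x t * x t ^ 2) t ∧
      HasDerivAt y (x t • appF (H (x t) (y t)) (fun i => μ t i / x t)) t ∧
      HasDerivAt (fun s => (lam s + 1) / x s)
        (-(x t) * dotF (appF (H (x t) (y t)) (fun i => μ t i / x t)) (fun i => μ t i / x t)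
          - x t ^ 2 / 2 *
            dotF (appF (Hx' H (x t) (y t)) (fun i => μ t i / x t)) (fun i => μ t i / x t)) t ∧
      (∀ i, HasDerivAt (fun s => μ s i / x s)
        (x t * ((lam t + 1) / x t * (μ t i / x t)
          - 1 / 2 *
            dotF (appF (Hy' H i (x t) (y t)) (fun j => μ t j / x t))
              (fun j => μ t j / x t))) t) ∧
      HasDerivAt (fun s => (x s)⁻¹ • ξ s)
        ((x t * ((lam t + 1) / x t)) • ((x t)⁻¹ • ξ t)) t :=
  stmt12_general n m H x lam y μ ξ I hsol hxpos
end
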